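/- Let n ≥ 3. Then (1/4)·Σ_{E₁,E₂,E₃,E₄ ∈ B} σ([E₁,[E₂,η]], E₃, E₄)·H(E₁,E₂)·H(E₃,E₄) = (n−2)²(n−1)n(n+2). -/

import Mathlib

open Matrix

/-- The square complex matrices of size `n`. -/
abbrev Mat (n : ℕ) := Matrix (Fin n) (Fin n) ℂ

/-- `T_k = (i/√(k(k+1)))·diag(1,…,1,−k,0,…,0)`, with `k` ones (positions `0,…,k−1` in
0-based indexing, i.e. positions `1,…,k` in the 1-based indexing of the paper) followed by
`−k`. -/
noncomputable def Tmat (n k : ℕ) : Mat n :=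
  (Complex.I / (Real.sqrt (k * (k + 1)) : ℂ)) •
    Matrix.diagonal (fun j : Fin n => if (j : ℕ) < k then 1 else if (j : ℕ) = k then -(k : ℂ) else 0)

/-- `E^r(k,l)`: the matrix with `(p,q)` entry `(1/√2)(δ_{kp}δ_{lq} − δ_{kq}δ_{lp})`. -/
noncomputable def Ermat (n : ℕ) (k l : Fin n) : Mat n :=
  ((Real.sqrt 2 : ℂ))⁻¹ • (Matrix.single k l 1 - Matrix.single l k 1)

/-- `E^c(k,l)`: the matrix with `(p,q)` entry `(i/√2)(δ_{kp}δ_{lq} + δ_{kq}δ_{lp})`. -/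
noncomputable def Ecmat (n : ℕ) (k l : Fin n) : Mat n :=
  (Complex.I / (Real.sqrt 2 : ℂ)) • (Matrix.single k l 1 + Matrix.single l k 1)

/-- The index set for the basis `B` of `su(n)`: `n−1` indices for the `T_k` and two copies
of the set of pairs `k < l` for the `E^r(k,l)` and `E^c(k,l)`. -/
abbrev BIdx (n : ℕ) :=
  Fin (n - 1) ⊕ ({p : Fin n × Fin n // p.1 < p.2} ⊕ {p : Fin n × Fin n // p.1 < p.2})

/-- The family `B = {T_1,…,T_{n−1}} ∪ {E^r(k,l)} ∪ {E^c(k,l)}`. -/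
noncomputable def bmat (n : ℕ) : BIdx n → Mat n
  | Sum.inl k => Tmat n (k + 1)
  | Sum.inr (Sum.inl p) => Ermat n p.1.1 p.1.2
  | Sum.inr (Sum.inr p) => Ecmat n p.1.1 p.1.2

/-- `η = i·diag(1,…,1,−(n−1))`. -/
noncomputable def eta (n : ℕ) : Mat n :=
  Complex.I • Matrix.diagonal (fun j : Fin n => if (j : ℕ) < n - 1 then 1 else -((n : ℂ) - 1))

/-- `H(X,Y) = i·tr(η(XY + YX))`, real-valued on `su(n)`. -/
noncomputable def Hform (n : ℕ) (X Y : Mat n) : ℂ :=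
  Complex.I * (eta n * (X * Y + Y * X)).trace

/-- `σ(X,Y,Z) = i(tr(XYZ) + tr(XZY))`, real-valued on `su(n)`. -/
noncomputable def sigmaC (n : ℕ) (X Y Z : Mat n) : ℂ :=
  Complex.I * ((X * Y * Z).trace + (X * Z * Y).trace)

/-- The matrix commutator `[A,B] = AB − BA`. -/
noncomputable def brkt {n : ℕ} (A B : Mat n) : Mat n := A * B - B * A

noncomputable def vfun (m j : ℕ) : ℂ := if j < m then 1 else if j = m then -(m:ℂ) else 0

lemma tsum' : ∀ (N A C : ℕ), A < N → C < N →
    ∑ k ∈ Finset.range (N-1), (vfun (k+1) A * vfun (k+1) C) / (((k:ℂ)+1)*((k:ℂ)+2))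
      = (if A = C then 1 else 0) - 1/(N:ℂ) := by
  intro N
  induction N with
  | zero => intro A C hA; omega
  | succ N ih =>
    intro A C hA hC
    rcases Nat.eq_zero_or_pos N with h0 | hN1
    · subst h0
      interval_cases A
      interval_cases C
      simp
    have hNC : (N:ℂ) ≠ 0 := Nat.cast_ne_zero.mpr (by omega)
    have hNC1 : (N:ℂ) + 1 ≠ 0 := by
      have := Nat.cast_ne_zero (R := ℂ) (n := N+1) |>.mpr (by omega)
      push_cast at this; exact this
    have hc : ((N-1 : ℕ):ℂ) = (N:ℂ) - 1 := by
      push_cast [Nat.cast_sub hN1]; ring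
    have hN' : N - 1 + 1 = N := by omega
    have hsplit : ∑ k ∈ Finset.range (N+1-1), (vfun (k+1) A * vfun (k+1) C) / (((k:ℂ)+1)*((k:ℂ)+2))
        = (∑ k ∈ Finset.range (N-1), (vfun (k+1) A * vfun (k+1) C) / (((k:ℂ)+1)*((k:ℂ)+2)))
          + (vfun N A * vfun N C) / ((N:ℂ)*((N:ℂ)+1)) := by
      have h1 : N + 1 - 1 = (N-1) + 1 := by omega
      rw [h1, Finset.sum_range_succ, hN', hc]
      have : ((N:ℂ) - 1 + 1) * ((N:ℂ) - 1 + 2) = (N:ℂ) * ((N:ℂ)+1) := by ring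
      rw [this]
    rw [hsplit]
    by_cases hA' : A < N
    · by_cases hC' : C < N
      · rw [ih A C hA' hC']
        have hvA : vfun N A = 1 := by simp [vfun, hA']
        have hvC : vfun N C = 1 := by simp [vfun, hC']
        rw [hvA, hvC]
        by_cases hAC : A = C <;> simp [hAC] <;> push_cast <;> field_simp <;> ring
      · have hCN : C = N := by omega
        subst hCN
        have hAC : A ≠ C := by omega
        have hvC : vfun C C = -(C:ℂ) := by simp [vfun]
        have hz : ∑ k ∈ Finset.range (C-1), (vfun (k+1) A * vfun (k+1) C) / (((k:ℂ)+1)*((k:ℂ)+2)) = 0 := by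
          apply Finset.sum_eq_zero
          intro k hk
          simp only [Finset.mem_range] at hk
          have e1 : ¬ (C < k + 1) := by omega
          have e2 : C ≠ k + 1 := by omega
          simp [vfun, e1, e2]
        rw [hz, hvC]
        have hvA : vfun C A = 1 := by simp [vfun, hA']
        rw [hvA]
        simp only [hAC, if_false]
        push_cast
        field_simp
        ring
    · have hAN : A = N := by omega
      subst hAN
      have hvA : vfun A A = -(A:ℂ) := by simp [vfun]
      have hz : ∑ k ∈ Finset.range (A-1), (vfun (k+1) A * vfun (k+1) C) / (((k:ℂ)+1)*((k:ℂ)+2)) = 0 := by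
        apply Finset.sum_eq_zero
        intro k hk
        simp only [Finset.mem_range] at hk
        have e1 : ¬ (A < k + 1) := by omega
        have e2 : A ≠ k + 1 := by omega
        simp [vfun, e1, e2]
      rw [hz, hvA]
      by_cases hC' : C < A
      · have hAC : A ≠ C := by omega
        have hvC : vfun A C = 1 := by simp [vfun, hC']
        rw [hvC]
        simp only [hAC, if_false]
        field_simp
        push_cast
        ring
      · have hCA : C = A := by omega
        subst hCA
        have hvC : vfun C C = -(C:ℂ) := by simp [vfun]
        rw [hvC]
        simp only [if_pos rfl]
        field_simp
        simp only [if_true]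
        push_cast
        ring

lemma Tmat_apply (n m : ℕ) (a b : Fin n) :
    Tmat n m a b = (Complex.I / (Real.sqrt (m * (m+1)) : ℝ)) * (if a = b then vfun m ↑a else 0) := by
  simp [Tmat, Matrix.diagonal_apply, vfun, Matrix.smul_apply]

lemma coef_sq (m : ℕ) (hm : 1 ≤ m) :
    (Complex.I / (Real.sqrt (m * (m+1)) : ℝ)) * (Complex.I / (Real.sqrt (m * (m+1)) : ℝ))
      = -(1/((m:ℂ)*((m:ℂ)+1))) := by
  have h0 : (0:ℝ) ≤ (m:ℝ) * ((m:ℝ)+1) := by positivity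
  have hs : ((Real.sqrt (m * (m+1)) : ℝ):ℂ) * ((Real.sqrt (m * (m+1)) : ℝ):ℂ) = ((m:ℂ)*((m:ℂ)+1)) := by
    rw [← Complex.ofReal_mul, Real.mul_self_sqrt h0]
    push_cast; ring
  calc (Complex.I / (Real.sqrt (m * (m+1)) : ℝ)) * (Complex.I / (Real.sqrt (m * (m+1)) : ℝ))
      = Complex.I * Complex.I / (((Real.sqrt (m * (m+1)) : ℝ):ℂ) * ((Real.sqrt (m * (m+1)) : ℝ):ℂ)) := by
        ring
    _ = -(1/((m:ℂ)*((m:ℂ)+1))) := by rw [Complex.I_mul_I, hs]; ring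

lemma pair_entry (n : ℕ) (k l a b c d : Fin n) :
    Ermat n k l a b * Ermat n k l c d + Ecmat n k l a b * Ecmat n k l c d
      = -(((if k = a ∧ l = b then 1 else 0) * (if k = d ∧ l = c then 1 else 0) : ℂ)
          + (if k = c ∧ l = d then 1 else 0) * (if k = b ∧ l = a then 1 else 0)) := by
  have h2 : ((Real.sqrt 2 : ℝ):ℂ) * ((Real.sqrt 2 : ℝ):ℂ) = 2 := by
    rw [← Complex.ofReal_mul, Real.mul_self_sqrt (by norm_num : (0:ℝ) ≤ 2)]
    norm_num
  have hne : ((Real.sqrt 2 : ℝ):ℂ) ≠ 0 := by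
    intro h; rw [h] at h2; simp at h2
  simp only [Ermat, Ecmat, Matrix.smul_apply, Matrix.sub_apply, Matrix.add_apply, smul_eq_mul]
  simp only [Matrix.single, Matrix.of_apply]
  set X : ℂ := if k = a ∧ l = b then 1 else 0
  set Y : ℂ := if l = a ∧ k = b then 1 else 0
  set X' : ℂ := if k = c ∧ l = d then 1 else 0
  set Y' : ℂ := if l = c ∧ k = d then 1 else 0
  have hY : (if k = b ∧ l = a then (1:ℂ) else 0) = Y := by
    simp only [Y]; congr 1; simp [and_comm]
  have hY' : (if k = d ∧ l = c then (1:ℂ) else 0) = Y' := by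
    simp only [Y']; congr 1; simp [and_comm]
  rw [hY, hY']
  have hII : Complex.I * Complex.I = -1 := Complex.I_mul_I
  calc (↑√2)⁻¹ * (X - Y) * ((↑√2)⁻¹ * (X' - Y')) + Complex.I / ↑√2 * (X + Y) * (Complex.I / ↑√2 * (X' + Y'))
      = ((↑√2:ℂ)⁻¹ * (↑√2:ℂ)⁻¹) * ((X - Y) * (X' - Y') + (Complex.I*Complex.I) * ((X + Y) * (X' + Y'))) := by
        ring
    _ = -(X * Y' + X' * Y) := by
        rw [hII]
        have : ((↑√2:ℂ)⁻¹ * (↑√2:ℂ)⁻¹) = (2:ℂ)⁻¹ := by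
          rw [← mul_inv]; rw [h2]
        rw [this]
        ring

lemma key1 (n : ℕ) (x y u v : Fin n) :
    ∑ k : Fin n, ∑ l : Fin n,
      (if k < l then ((if k = x ∧ l = y then (1:ℂ) else 0) * (if k = u ∧ l = v then 1 else 0)) else 0)
      = if x = u ∧ y = v ∧ x < y then 1 else 0 := by
  have hpt : ∀ k l : Fin n,
      (if k < l then ((if k = x ∧ l = y then (1:ℂ) else 0) * (if k = u ∧ l = v then 1 else 0)) else 0)
      = if l = y then (if k = x then (if x = u ∧ y = v ∧ x < y then (1:ℂ) else 0) else 0) else 0 := by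
    intro k l
    by_cases h1 : k = x
    · by_cases h2 : l = y
      · subst h1; subst h2
        by_cases h3 : k < l
        · simp [h3]
        · simp [h3]
      · simp [h2]
    · by_cases h2 : l = y
      · simp [h1, h2]
      · simp [h1, h2]
  calc ∑ k : Fin n, ∑ l : Fin n,
        (if k < l then ((if k = x ∧ l = y then (1:ℂ) else 0) * (if k = u ∧ l = v then 1 else 0)) else 0)
      = ∑ k : Fin n, ∑ l : Fin n,
        (if l = y then (if k = x then (if x = u ∧ y = v ∧ x < y then (1:ℂ) else 0) else 0) else 0) := by
        exact Finset.sum_congr rfl (fun k _ => Finset.sum_congr rfl (fun l _ => hpt k l))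
    _ = if x = u ∧ y = v ∧ x < y then 1 else 0 := by
        simp [Finset.sum_ite_eq']

lemma Epart (n : ℕ) (a b c d : Fin n) :
    ∑ p : {p : Fin n × Fin n // p.1 < p.2},
       (Ermat n p.1.1 p.1.2 a b * Ermat n p.1.1 p.1.2 c d
        + Ecmat n p.1.1 p.1.2 a b * Ecmat n p.1.1 p.1.2 c d)
     = -((if a = d ∧ b = c ∧ a < b then 1 else 0) + (if a = d ∧ b = c ∧ b < a then (1:ℂ) else 0)) := by
  have step1 : ∑ p : {p : Fin n × Fin n // p.1 < p.2},
       (Ermat n p.1.1 p.1.2 a b * Ermat n p.1.1 p.1.2 c d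
        + Ecmat n p.1.1 p.1.2 a b * Ecmat n p.1.1 p.1.2 c d)
      = ∑ q ∈ Finset.univ.filter (fun q : Fin n × Fin n => q.1 < q.2),
        (Ermat n q.1 q.2 a b * Ermat n q.1 q.2 c d + Ecmat n q.1 q.2 a b * Ecmat n q.1 q.2 c d) := by
    rw [Finset.sum_subtype (p := fun q : Fin n × Fin n => q.1 < q.2) (Finset.univ.filter (fun q : Fin n × Fin n => q.1 < q.2))
      (by intro q; simp) (fun q : Fin n × Fin n =>
        Ermat n q.1 q.2 a b * Ermat n q.1 q.2 c d + Ecmat n q.1 q.2 a b * Ecmat n q.1 q.2 c d)]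
  rw [step1, Finset.sum_filter, Fintype.sum_prod_type]
  have step2 : ∀ k l : Fin n,
      (if k < l then (Ermat n k l a b * Ermat n k l c d + Ecmat n k l a b * Ecmat n k l c d) else 0)
      = -((if k < l then ((if k = a ∧ l = b then (1:ℂ) else 0) * (if k = d ∧ l = c then 1 else 0)) else 0)
        + (if k < l then ((if k = b ∧ l = a then (1:ℂ) else 0) * (if k = c ∧ l = d then 1 else 0)) else 0)) := by
    intro k l
    by_cases hkl : k < l
    · rw [if_pos hkl, if_pos hkl, if_pos hkl, pair_entry]
      ring
    · rw [if_neg hkl, if_neg hkl, if_neg hkl]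
      ring
  calc ∑ k : Fin n, ∑ l : Fin n,
        (if k < l then (Ermat n k l a b * Ermat n k l c d + Ecmat n k l a b * Ecmat n k l c d) else 0)
      = -((∑ k : Fin n, ∑ l : Fin n,
          (if k < l then ((if k = a ∧ l = b then (1:ℂ) else 0) * (if k = d ∧ l = c then 1 else 0)) else 0))
        + (∑ k : Fin n, ∑ l : Fin n,
          (if k < l then ((if k = b ∧ l = a then (1:ℂ) else 0) * (if k = c ∧ l = d then 1 else 0)) else 0))) := by
        rw [Finset.sum_congr rfl (fun k _ => Finset.sum_congr rfl (fun l _ => step2 k l))]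
        rw [← Finset.sum_add_distrib]
        rw [← Finset.sum_neg_distrib]
        apply Finset.sum_congr rfl
        intro k _
        rw [← Finset.sum_add_distrib, ← Finset.sum_neg_distrib]
    _ = -((if a = d ∧ b = c ∧ a < b then 1 else 0) + (if a = d ∧ b = c ∧ b < a then (1:ℂ) else 0)) := by
        rw [key1, key1]
        congr 2
        by_cases h1 : b = c <;> by_cases h2 : a = d <;> simp [h1, h2]

lemma Tpart (n : ℕ) (a b c d : Fin n) :
    ∑ k : Fin (n-1), Tmat n (↑k+1) a b * Tmat n (↑k+1) c d
      = (if a = b then 1 else 0) * (if c = d then 1 else 0) * ((1:ℂ)/n - if a = c then 1 else 0) := by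
  by_cases hab : a = b
  · by_cases hcd : c = d
    · have hterm : ∀ k : ℕ, Tmat n (k+1) a b * Tmat n (k+1) c d
          = -((vfun (k+1) ↑a * vfun (k+1) ↑c) / (((k:ℂ)+1)*((k:ℂ)+2))) := by
        intro k
        rw [Tmat_apply, Tmat_apply, if_pos hab, if_pos hcd]
        have h := coef_sq (k+1) (by omega)
        push_cast at h ⊢
        calc (Complex.I / (Real.sqrt ((k+1) * (k+1+1)) : ℝ)) * vfun (k+1) ↑a *
              ((Complex.I / (Real.sqrt ((k+1) * (k+1+1)) : ℝ)) * vfun (k+1) ↑c)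
            = ((Complex.I / (Real.sqrt ((k+1) * (k+1+1)) : ℝ)) * (Complex.I / (Real.sqrt ((k+1) * (k+1+1)) : ℝ)))
              * (vfun (k+1) ↑a * vfun (k+1) ↑c) := by ring
          _ = -((vfun (k+1) ↑a * vfun (k+1) ↑c) / (((k:ℂ)+1)*((k:ℂ)+2))) := by
              rw [h]; ring
      have : ∑ k : Fin (n-1), Tmat n (↑k+1) a b * Tmat n (↑k+1) c d
          = ∑ k ∈ Finset.range (n-1), -((vfun (k+1) ↑a * vfun (k+1) ↑c) / (((k:ℂ)+1)*((k:ℂ)+2))) := by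
        rw [← Fin.sum_univ_eq_sum_range (fun k => -((vfun (k+1) ↑a * vfun (k+1) ↑c) / (((k:ℂ)+1)*((k:ℂ)+2))))]
        exact Finset.sum_congr rfl (fun k _ => hterm ↑k)
      rw [this, Finset.sum_neg_distrib, tsum' n ↑a ↑c a.isLt c.isLt]
      have : ((↑a:ℕ) = (↑c:ℕ)) ↔ a = c := Fin.val_inj
      by_cases hac : a = c <;> simp [hab, hcd, hac, this, Fin.val_inj] <;> ring
    · simp only [if_neg hcd]
      have : ∀ k : Fin (n-1), Tmat n (↑k+1) a b * Tmat n (↑k+1) c d = 0 := by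
        intro k; rw [Tmat_apply (a := c), if_neg hcd]; ring
      rw [Finset.sum_congr rfl (fun k _ => this k)]
      simp
  · simp only [if_neg hab]
    have : ∀ k : Fin (n-1), Tmat n (↑k+1) a b * Tmat n (↑k+1) c d = 0 := by
      intro k; rw [Tmat_apply (a := a), if_neg hab]; ring
    rw [Finset.sum_congr rfl (fun k _ => this k)]
    simp


lemma keyite {n : ℕ} (a b c d : Fin n) :
    (if a = b then (1:ℂ) else 0) * (if c = d then 1 else 0) * (if a = c then 1 else 0)
      + ((if a = d ∧ b = c ∧ a < b then 1 else 0) + (if a = d ∧ b = c ∧ b < a then (1:ℂ) else 0))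
      = (if a = d then 1 else 0) * (if b = c then 1 else 0) := by
  by_cases h1 : a = d
  · by_cases h2 : b = c
    · by_cases h3 : a = b
      · have h4 : ¬ a < b := by rw [h3]; exact lt_irrefl b
        have h5 : ¬ b < a := by rw [h3]; exact lt_irrefl b
        have h6 : c = d := h2.symm.trans (h3.symm.trans h1)
        have h7 : a = c := h3.trans h2
        simp [h1, h2, h3, h4, h5, h6, h7]
      · subst h1; subst h2
        rcases lt_or_gt_of_ne h3 with h4 | h4
        · have h5 : ¬ b < a := asymm h4
          simp [h3, h4, h5, Ne.symm h3]
        · have h5 : ¬ a < b := asymm h4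
          simp [h3, h4, h5, Ne.symm h3]
    · have h3 : ¬ (a = b) ∨ ¬ (a = c) := by
        by_contra h; push_neg at h; exact h2 (h.1.symm.trans h.2)
      rcases h3 with h3 | h3 <;> simp [h2, h3]
  · have h2 : ¬ (c = d) ∨ ¬ (a = c) := by
      by_contra h; push_neg at h; exact h1 (h.2.trans h.1)
    rcases h2 with h2 | h2 <;> simp [h1, h2]

lemma fierz (n : ℕ) (a b c d : Fin n) :
    ∑ i : BIdx n, bmat n i a b * bmat n i c d
      = (if a = b then 1 else 0) * (if c = d then 1 else 0) / n
        - (if a = d then 1 else 0) * (if b = c then 1 else 0) := by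
  have hsplit : ∑ i : BIdx n, bmat n i a b * bmat n i c d
      = (∑ k : Fin (n-1), Tmat n (↑k+1) a b * Tmat n (↑k+1) c d)
        + ∑ p : {p : Fin n × Fin n // p.1 < p.2},
           (Ermat n p.1.1 p.1.2 a b * Ermat n p.1.1 p.1.2 c d
            + Ecmat n p.1.1 p.1.2 a b * Ecmat n p.1.1 p.1.2 c d) := by
    rw [Fintype.sum_sum_type, Fintype.sum_sum_type, ← Finset.sum_add_distrib]
    rfl
  rw [hsplit, Tpart, Epart]
  linear_combination (-1 : ℂ) * keyite a b c d

lemma M1 (n : ℕ) (A : Mat n) :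
    ∑ i : BIdx n, bmat n i * A * bmat n i = ((n:ℂ))⁻¹ • A - A.trace • (1 : Mat n) := by
  ext p q
  rw [Matrix.sum_apply]
  have hterm : ∀ i : BIdx n, (bmat n i * A * bmat n i) p q
      = ∑ r : Fin n, ∑ s : Fin n, A r s * (bmat n i p r * bmat n i s q) := by
    intro i
    simp only [Matrix.mul_apply, Finset.sum_mul]
    rw [Finset.sum_comm]
    apply Finset.sum_congr rfl; intro r _
    apply Finset.sum_congr rfl; intro s _
    ring
  rw [Finset.sum_congr rfl (fun i _ => hterm i)]
  rw [Finset.sum_comm]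
  have h2 : ∀ r : Fin n, ∑ i : BIdx n, ∑ s : Fin n, A r s * (bmat n i p r * bmat n i s q)
      = ∑ s : Fin n, A r s * ((if p = r then 1 else 0) * (if s = q then (1:ℂ) else 0) / n
          - (if p = q then 1 else 0) * (if r = s then 1 else 0)) := by
    intro r
    rw [Finset.sum_comm]
    apply Finset.sum_congr rfl; intro s _
    rw [← Finset.mul_sum, fierz]
  rw [Finset.sum_congr rfl (fun r _ => h2 r)]
  have h3 : ∀ r : Fin n, ∑ s : Fin n, A r s * ((if p = r then 1 else 0) * (if s = q then (1:ℂ) else 0) / n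
          - (if p = q then 1 else 0) * (if r = s then 1 else 0))
      = (if p = r then 1 else 0) * A r q / n - (if p = q then 1 else 0) * A r r := by
    intro r
    simp only [mul_sub]
    rw [Finset.sum_sub_distrib]
    congr 1
    · have : ∀ s : Fin n, A r s * ((if p = r then 1 else 0) * (if s = q then (1:ℂ) else 0) / n)
          = if s = q then A r s * (if p = r then 1 else 0) / n else 0 := by
        intro s; by_cases h : s = q <;> by_cases h2 : p = r <;> simp [h, h2] <;> try ring
      rw [Finset.sum_congr rfl (fun s _ => this s), Finset.sum_ite_eq' Finset.univ q]
      simp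
      try ring
    · have : ∀ s : Fin n, A r s * ((if p = q then 1 else 0) * (if r = s then (1:ℂ) else 0))
          = if r = s then A r s * (if p = q then 1 else 0) else 0 := by
        intro s; by_cases h : r = s <;> by_cases h2 : p = q <;> simp [h, h2] <;> try ring
      rw [Finset.sum_congr rfl (fun s _ => this s), Finset.sum_ite_eq Finset.univ r]
      simp
      try ring
  rw [Finset.sum_congr rfl (fun r _ => h3 r), Finset.sum_sub_distrib]
  have h4 : ∑ r : Fin n, (if p = r then 1 else 0) * A r q / n = A p q / n := by
    have : ∀ r : Fin n, (if p = r then 1 else 0) * A r q / n = if p = r then A r q / n else 0 := by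
      intro r; by_cases h : p = r <;> simp [h]
    rw [Finset.sum_congr rfl (fun r _ => this r), Finset.sum_ite_eq Finset.univ p]
    simp
  have h5 : ∑ r : Fin n, (if p = q then 1 else 0) * A r r = (if p = q then 1 else 0) * A.trace := by
    rw [← Finset.mul_sum]; rfl
  rw [h4, h5]
  simp only [Matrix.sub_apply, Matrix.smul_apply, Matrix.one_apply, smul_eq_mul, mul_ite, mul_one, mul_zero]
  by_cases h : p = q <;> simp [h] <;> ring

lemma M2 (n : ℕ) (A : Mat n) :
    ∑ i : BIdx n, (A * bmat n i).trace • bmat n i = (A.trace / n) • (1 : Mat n) - A := by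
  ext p q
  rw [Matrix.sum_apply]
  have hterm : ∀ i : BIdx n, ((A * bmat n i).trace • bmat n i) p q
      = ∑ r : Fin n, ∑ s : Fin n, A r s * (bmat n i s r * bmat n i p q) := by
    intro i
    simp only [Matrix.smul_apply, smul_eq_mul, Matrix.trace, Matrix.diag, Matrix.mul_apply,
      Finset.sum_mul]
    apply Finset.sum_congr rfl; intro r _
    apply Finset.sum_congr rfl; intro s _
    ring
  rw [Finset.sum_congr rfl (fun i _ => hterm i)]
  rw [Finset.sum_comm]
  have h2 : ∀ r : Fin n, ∑ i : BIdx n, ∑ s : Fin n, A r s * (bmat n i s r * bmat n i p q)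
      = ∑ s : Fin n, A r s * ((if s = r then 1 else 0) * (if p = q then (1:ℂ) else 0) / n
          - (if s = q then 1 else 0) * (if r = p then 1 else 0)) := by
    intro r
    rw [Finset.sum_comm]
    apply Finset.sum_congr rfl; intro s _
    rw [← Finset.mul_sum, fierz]
  rw [Finset.sum_congr rfl (fun r _ => h2 r)]
  have h3 : ∀ r : Fin n, ∑ s : Fin n, A r s * ((if s = r then 1 else 0) * (if p = q then (1:ℂ) else 0) / n
          - (if s = q then 1 else 0) * (if r = p then 1 else 0))
      = A r r * (if p = q then 1 else 0) / n - A r q * (if r = p then 1 else 0) := by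
    intro r
    simp only [mul_sub]
    rw [Finset.sum_sub_distrib]
    congr 1
    · have : ∀ s : Fin n, A r s * ((if s = r then 1 else 0) * (if p = q then (1:ℂ) else 0) / n)
          = if s = r then A r s * (if p = q then 1 else 0) / n else 0 := by
        intro s; by_cases h : s = r <;> by_cases h2 : p = q <;> simp [h, h2] <;> try ring
      rw [Finset.sum_congr rfl (fun s _ => this s), Finset.sum_ite_eq' Finset.univ r]
      simp
    · have : ∀ s : Fin n, A r s * ((if s = q then 1 else 0) * (if r = p then (1:ℂ) else 0))
          = if s = q then A r s * (if r = p then 1 else 0) else 0 := by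
        intro s; by_cases h : s = q <;> by_cases h2 : r = p <;> simp [h, h2] <;> try ring
      rw [Finset.sum_congr rfl (fun s _ => this s), Finset.sum_ite_eq' Finset.univ q]
      simp
  rw [Finset.sum_congr rfl (fun r _ => h3 r), Finset.sum_sub_distrib]
  have h4 : ∑ r : Fin n, A r r * (if p = q then 1 else 0) / n = A.trace * (if p = q then 1 else 0) / n := by
    rw [← Finset.sum_div, ← Finset.sum_mul]; rfl
  have h5 : ∑ r : Fin n, A r q * (if r = p then 1 else 0) = A p q := by
    have : ∀ r : Fin n, A r q * (if r = p then 1 else 0) = if r = p then A r q else 0 := by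
      intro r; by_cases h : r = p <;> simp [h]
    rw [Finset.sum_congr rfl (fun r _ => this r), Finset.sum_ite_eq' Finset.univ p]
    simp
  rw [h4, h5]
  simp only [Matrix.sub_apply, Matrix.smul_apply, Matrix.one_apply, smul_eq_mul, mul_ite, mul_one, mul_zero]
  by_cases h : p = q <;> simp [h] <;> ring

lemma K1 (n : ℕ) (A B : Mat n) :
    ∑ i : BIdx n, (A * bmat n i * B * bmat n i).trace
      = (A * B).trace / n - A.trace * B.trace := by
  have h : ∀ i : BIdx n, (A * bmat n i * B * bmat n i).trace = (A * (bmat n i * B * bmat n i)).trace := by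
    intro i; rw [← Matrix.mul_assoc, ← Matrix.mul_assoc]
  rw [Finset.sum_congr rfl (fun i _ => h i), ← Matrix.trace_sum, ← Matrix.mul_sum, M1]
  rw [Matrix.mul_sub, Matrix.trace_sub, Matrix.mul_smul, Matrix.trace_smul, Matrix.mul_smul,
    Matrix.trace_smul, Matrix.mul_one]
  simp [smul_eq_mul, div_eq_mul_inv]
  try ring

lemma K2 (n : ℕ) (A B : Mat n) :
    ∑ i : BIdx n, (A * bmat n i).trace * (B * bmat n i).trace
      = A.trace * B.trace / n - (A * B).trace := by
  have h : ∀ i : BIdx n, (A * bmat n i).trace * (B * bmat n i).trace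
      = (B * ((A * bmat n i).trace • bmat n i)).trace := by
    intro i; rw [Matrix.mul_smul, Matrix.trace_smul]; simp [smul_eq_mul]; try ring
  rw [Finset.sum_congr rfl (fun i _ => h i), ← Matrix.trace_sum, ← Matrix.mul_sum, M2]
  rw [Matrix.mul_sub, Matrix.trace_sub, Matrix.mul_smul, Matrix.trace_smul, Matrix.mul_one]
  rw [Matrix.trace_mul_comm B A]
  simp [smul_eq_mul, div_eq_mul_inv]
  try ring

lemma cyc4 {n : ℕ} (A B C D : Mat n) : (A*B*C*D).trace = (D*A*B*C).trace := by
  rw [Matrix.trace_mul_cycle (A*B) C D]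
  congr 1
  simp only [Matrix.mul_assoc]

lemma eta_trace (n : ℕ) (hn : 1 ≤ n) : (eta n).trace = 0 := by
  rw [eta, Matrix.trace_smul, Matrix.trace_diagonal]
  have h : ∑ j : Fin n, (if (j:ℕ) < n - 1 then (1:ℂ) else -((n:ℂ)-1))
      = ∑ j ∈ Finset.range n, (if j < n - 1 then (1:ℂ) else -((n:ℂ)-1)) :=
    Fin.sum_univ_eq_sum_range (fun j => if j < n - 1 then (1:ℂ) else -((n:ℂ)-1)) n
  rw [h]
  have h2 : Finset.range n = Finset.range ((n-1) + 1) := by rw [Nat.sub_add_cancel hn]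
  rw [h2, Finset.sum_range_succ]
  have h3 : ∀ j ∈ Finset.range (n-1), (if j < n - 1 then (1:ℂ) else -((n:ℂ)-1)) = 1 := by
    intro j hj; simp only [Finset.mem_range] at hj; simp [hj]
  rw [Finset.sum_congr rfl h3, Finset.sum_const, Finset.card_range]
  have h4 : ¬ ((n-1) < n - 1) := lt_irrefl _
  rw [if_neg h4]
  have h5 : ((n-1:ℕ):ℂ) = (n:ℂ) - 1 := by push_cast [Nat.cast_sub hn]; ring
  simp [h5]

lemma eta_cube_trace (n : ℕ) (hn : 1 ≤ n) :
    (eta n * eta n * eta n).trace = Complex.I * ((n:ℂ)*((n:ℂ)-1)*((n:ℂ)-2)) := by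
  rw [eta]
  simp only [Matrix.smul_mul, Matrix.mul_smul, Matrix.diagonal_mul_diagonal,
    Matrix.trace_smul, smul_eq_mul, Matrix.trace_diagonal]
  have h : ∑ j : Fin n, ((if (j:ℕ) < n - 1 then (1:ℂ) else -((n:ℂ)-1)) * (if (j:ℕ) < n - 1 then (1:ℂ) else -((n:ℂ)-1)) * (if (j:ℕ) < n - 1 then (1:ℂ) else -((n:ℂ)-1)))
      = ∑ j ∈ Finset.range n, ((if j < n - 1 then (1:ℂ) else -((n:ℂ)-1)) * (if j < n - 1 then (1:ℂ) else -((n:ℂ)-1)) * (if j < n - 1 then (1:ℂ) else -((n:ℂ)-1))) :=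
    Fin.sum_univ_eq_sum_range (fun j => (if j < n - 1 then (1:ℂ) else -((n:ℂ)-1)) * (if j < n - 1 then (1:ℂ) else -((n:ℂ)-1)) * (if j < n - 1 then (1:ℂ) else -((n:ℂ)-1))) n
  rw [h]
  have h2 : Finset.range n = Finset.range ((n-1) + 1) := by rw [Nat.sub_add_cancel hn]
  rw [h2, Finset.sum_range_succ]
  have h3 : ∀ j ∈ Finset.range (n-1),
      ((if j < n - 1 then (1:ℂ) else -((n:ℂ)-1)) * (if j < n - 1 then (1:ℂ) else -((n:ℂ)-1)) * (if j < n - 1 then (1:ℂ) else -((n:ℂ)-1))) = 1 := by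
    intro j hj; simp only [Finset.mem_range] at hj; simp [hj]
  rw [Finset.sum_congr rfl h3, Finset.sum_const, Finset.card_range]
  have h4 : ¬ ((n-1) < n - 1) := lt_irrefl _
  rw [if_neg h4]
  have h5 : ((n-1:ℕ):ℂ) = (n:ℂ) - 1 := by push_cast [Nat.cast_sub hn]; ring
  rw [nsmul_eq_mul, h5]
  have hI : Complex.I * Complex.I = -1 := Complex.I_mul_I
  linear_combination Complex.I * (((n:ℂ)-1) - ((n:ℂ)-1)^3) * hI

lemma step34 (n : ℕ) (hn : 1 ≤ n) (C : Mat n) :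
    ∑ i₃ : BIdx n, ∑ i₄ : BIdx n,
      sigmaC n C (bmat n i₃) (bmat n i₄) * Hform n (bmat n i₃) (bmat n i₄)
    = (8/(n:ℂ) - 2*(n:ℂ)) * (C * eta n).trace := by
  have hI : Complex.I * Complex.I = -1 := Complex.I_mul_I
  have hnz : (n:ℂ) ≠ 0 := Nat.cast_ne_zero.mpr (by omega)
  have hsummand : ∀ (G E : Mat n), sigmaC n C G E * Hform n G E
      = -( ((C*G)*E).trace * (((eta n)*G)*E).trace
         + ((C*G)*E).trace * ((G*(eta n))*E).trace
         + ((G*C)*E).trace * (((eta n)*G)*E).trace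
         + ((G*C)*E).trace * ((G*(eta n))*E).trace ) := by
    intro G E
    have e1 : (C*E*G).trace = ((G*C)*E).trace := by
      rw [Matrix.trace_mul_cycle C E G]
    have e2 : ((eta n)*(G*E + E*G)).trace = (((eta n)*G)*E).trace + ((G*(eta n))*E).trace := by
      rw [Matrix.mul_add, Matrix.trace_add]
      congr 1
      · rw [← Matrix.mul_assoc]
      · rw [← Matrix.mul_assoc, Matrix.trace_mul_cycle (eta n) E G]
    rw [sigmaC, Hform, e1, e2]
    set a := ((C*G)*E).trace
    set b := ((G*C)*E).trace
    set c := (((eta n)*G)*E).trace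
    set d := ((G*(eta n))*E).trace
    calc Complex.I * (a + b) * (Complex.I * (c + d))
        = (Complex.I * Complex.I) * ((a+b)*(c+d)) := by ring
      _ = -(a*c + a*d + b*c + b*d) := by rw [hI]; ring
  have hinner : ∀ G : Mat n, ∑ i₄ : BIdx n, sigmaC n C G (bmat n i₄) * Hform n G (bmat n i₄)
      = -( ((C*G).trace * ((eta n)*G).trace / n - ((C*G)*((eta n)*G)).trace)
         + ((C*G).trace * (G*(eta n)).trace / n - ((C*G)*(G*(eta n))).trace)
         + ((G*C).trace * ((eta n)*G).trace / n - ((G*C)*((eta n)*G)).trace)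
         + ((G*C).trace * (G*(eta n)).trace / n - ((G*C)*(G*(eta n))).trace) ) := by
    intro G
    rw [Finset.sum_congr rfl (fun i _ => hsummand G (bmat n i))]
    rw [Finset.sum_neg_distrib, Finset.sum_add_distrib, Finset.sum_add_distrib,
      Finset.sum_add_distrib]
    rw [K2 n (C*G) ((eta n)*G), K2 n (C*G) (G*(eta n)), K2 n (G*C) ((eta n)*G), K2 n (G*C) (G*(eta n))]
  rw [Finset.sum_congr rfl (fun i _ => hinner (bmat n i))]
  have hshape : ∀ G : Mat n,
      -( ((C*G).trace * ((eta n)*G).trace / n - ((C*G)*((eta n)*G)).trace)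
       + ((C*G).trace * (G*(eta n)).trace / n - ((C*G)*(G*(eta n))).trace)
       + ((G*C).trace * ((eta n)*G).trace / n - ((G*C)*((eta n)*G)).trace)
       + ((G*C).trace * (G*(eta n)).trace / n - ((G*C)*(G*(eta n))).trace) )
      = (-4/(n:ℂ)) * ((C*G).trace * ((eta n)*G).trace)
        + (C*G*(eta n)*G).trace + ((eta n)*C*G*(1:Mat n)*G).trace
        + (C*(eta n)*G*(1:Mat n)*G).trace + ((eta n)*G*C*G).trace := by
    intro G
    have t1 : (G*(eta n)).trace = ((eta n)*G).trace := Matrix.trace_mul_comm G (eta n)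
    have t2 : (G*C).trace = (C*G).trace := Matrix.trace_mul_comm G C
    have u1 : ((C*G)*((eta n)*G)).trace = (C*G*(eta n)*G).trace := by
      congr 1; simp only [Matrix.mul_assoc]
    have u2 : ((C*G)*(G*(eta n))).trace = ((eta n)*C*G*(1:Mat n)*G).trace := by
      have : ((C*G)*(G*(eta n))).trace = (C*G*G*(eta n)).trace := by
        congr 1; simp only [Matrix.mul_assoc]
      rw [this, cyc4 C G G (eta n)]
      congr 1
      simp only [Matrix.mul_one, Matrix.one_mul, Matrix.mul_assoc]
    have u3 : ((G*C)*((eta n)*G)).trace = (C*(eta n)*G*(1:Mat n)*G).trace := by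
      have : ((G*C)*((eta n)*G)).trace = (G*C*(eta n)*G).trace := by
        congr 1; simp only [Matrix.mul_assoc]
      rw [this, ← cyc4 C (eta n) G G]
      congr 1
      simp only [Matrix.mul_one, Matrix.one_mul, Matrix.mul_assoc]
    have u4 : ((G*C)*(G*(eta n))).trace = ((eta n)*G*C*G).trace := by
      have : ((G*C)*(G*(eta n))).trace = (G*C*G*(eta n)).trace := by
        congr 1; simp only [Matrix.mul_assoc]
      rw [this, cyc4 G C G (eta n)]
    rw [t1, t2, u1, u2, u3, u4]
    ring
  rw [Finset.sum_congr rfl (fun i _ => hshape (bmat n i))]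
  rw [Finset.sum_add_distrib, Finset.sum_add_distrib, Finset.sum_add_distrib,
    Finset.sum_add_distrib, ← Finset.mul_sum]
  rw [K2 n C (eta n), K1 n C (eta n), K1 n ((eta n)*C) (1:Mat n), K1 n (C*(eta n)) (1:Mat n),
    K1 n (eta n) C]
  rw [eta_trace n hn]
  rw [Matrix.mul_one, Matrix.mul_one]
  rw [Matrix.trace_one]
  rw [Matrix.trace_mul_comm (eta n) C]
  simp only [Fintype.card_fin]
  field_simp
  ring

set_option maxHeartbeats 2000000 in
lemma step12 (n : ℕ) (hn : 1 ≤ n) :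
    ∑ i₁ : BIdx n, ∑ i₂ : BIdx n,
      ((brkt (bmat n i₁) (brkt (bmat n i₂) (eta n))) * eta n).trace
        * Hform n (bmat n i₁) (bmat n i₂)
    = Complex.I * (2*(n:ℂ)) * ((eta n * eta n * eta n).trace) := by
  have hnz : (n:ℂ) ≠ 0 := Nat.cast_ne_zero.mpr (by omega)
  set η := eta n with hη
  have hsummand : ∀ A E : Mat n,
      ((brkt A (brkt E η)) * η).trace * Hform n A E
      = Complex.I * ( ((η*η*A)*E).trace * ((η*A)*E).trace
        + ((η*η*A)*E).trace * ((A*η)*E).trace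
        - ((η*A*η)*E).trace * ((η*A)*E).trace
        - ((η*A*η)*E).trace * ((η*A)*E).trace
        - ((η*A*η)*E).trace * ((A*η)*E).trace
        - ((η*A*η)*E).trace * ((A*η)*E).trace
        + ((A*η*η)*E).trace * ((η*A)*E).trace
        + ((A*η*η)*E).trace * ((A*η)*E).trace ) := by
    intro A E
    have w1 : ((A*(E*η))*η).trace = ((η*η*A)*E).trace := by
      have h : (A*(E*η))*η = A*E*η*η := by simp only [Matrix.mul_assoc]
      rw [h, cyc4 A E η η, cyc4 η A E η]
    have w2 : ((A*(η*E))*η).trace = ((η*A*η)*E).trace := by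
      have h : (A*(η*E))*η = A*η*E*η := by simp only [Matrix.mul_assoc]
      rw [h, cyc4 A η E η]
    have w3 : (((E*η)*A)*η).trace = ((η*A*η)*E).trace := by
      have h : ((E*η)*A)*η = E*η*A*η := by simp only [Matrix.mul_assoc]
      rw [h, cyc4 E η A η, cyc4 η E η A, cyc4 A η E η]
    have w4 : (((η*E)*A)*η).trace = ((A*η*η)*E).trace := by
      have h : ((η*E)*A)*η = η*E*A*η := by simp only [Matrix.mul_assoc]
      rw [h, cyc4 η E A η, cyc4 η η E A]
    have hC : ((brkt A (brkt E η)) * η).trace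
        = ((η*η*A)*E).trace - 2*((η*A*η)*E).trace + ((A*η*η)*E).trace := by
      rw [brkt, brkt]
      simp only [Matrix.sub_mul, Matrix.mul_sub, Matrix.trace_sub]
      rw [w1, w2, w3, w4]
      ring
    have hH : Hform n A E = Complex.I * (((η*A)*E).trace + ((A*η)*E).trace) := by
      rw [Hform, ← hη]
      rw [Matrix.mul_add, Matrix.trace_add]
      congr 2
      · rw [← Matrix.mul_assoc]
      · rw [← Matrix.mul_assoc, Matrix.trace_mul_cycle η E A]
    rw [hC, hH]
    ring
  have hinner : ∀ A : Mat n,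
      ∑ i₂ : BIdx n, ((brkt A (brkt (bmat n i₂) η)) * η).trace * Hform n A (bmat n i₂)
      = Complex.I * ( ((η*η*A).trace * (η*A).trace / n - ((η*η*A)*(η*A)).trace)
        + ((η*η*A).trace * (A*η).trace / n - ((η*η*A)*(A*η)).trace)
        - ((η*A*η).trace * (η*A).trace / n - ((η*A*η)*(η*A)).trace)
        - ((η*A*η).trace * (η*A).trace / n - ((η*A*η)*(η*A)).trace)
        - ((η*A*η).trace * (A*η).trace / n - ((η*A*η)*(A*η)).trace)
        - ((η*A*η).trace * (A*η).trace / n - ((η*A*η)*(A*η)).trace)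
        + ((A*η*η).trace * (η*A).trace / n - ((A*η*η)*(η*A)).trace)
        + ((A*η*η).trace * (A*η).trace / n - ((A*η*η)*(A*η)).trace) ) := by
    intro A
    rw [Finset.sum_congr rfl (fun i _ => hsummand A (bmat n i))]
    rw [← Finset.mul_sum]
    congr 1
    rw [Finset.sum_add_distrib, Finset.sum_add_distrib, Finset.sum_sub_distrib,
      Finset.sum_sub_distrib, Finset.sum_sub_distrib, Finset.sum_sub_distrib,
      Finset.sum_add_distrib]
    rw [K2 n (η*η*A) (η*A), K2 n (η*η*A) (A*η), K2 n (η*A*η) (η*A), K2 n (η*A*η) (A*η),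
      K2 n (A*η*η) (η*A), K2 n (A*η*η) (A*η)]
  rw [Finset.sum_congr rfl (fun i _ => hinner (bmat n i))]
  have hshape : ∀ A : Mat n,
      Complex.I * ( ((η*η*A).trace * (η*A).trace / n - ((η*η*A)*(η*A)).trace)
        + ((η*η*A).trace * (A*η).trace / n - ((η*η*A)*(A*η)).trace)
        - ((η*A*η).trace * (η*A).trace / n - ((η*A*η)*(η*A)).trace)
        - ((η*A*η).trace * (η*A).trace / n - ((η*A*η)*(η*A)).trace)
        - ((η*A*η).trace * (A*η).trace / n - ((η*A*η)*(A*η)).trace)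
        - ((η*A*η).trace * (A*η).trace / n - ((η*A*η)*(A*η)).trace)
        + ((A*η*η).trace * (η*A).trace / n - ((A*η*η)*(η*A)).trace)
        + ((A*η*η).trace * (A*η).trace / n - ((A*η*η)*(A*η)).trace) )
      = Complex.I * ( ((η*η)*A*η*A).trace + ((η*η)*A*η*A).trace
          - ((η*η*η)*A*(1:Mat n)*A).trace - ((η*η*η)*A*(1:Mat n)*A).trace ) := by
    intro A
    congr 1
    have s2 : (η*A*η).trace = (η*η*A).trace := by
      rw [Matrix.trace_mul_cycle η A η]
    have s3 : (A*η*η).trace = (η*η*A).trace := by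
      rw [Matrix.trace_mul_cycle A η η, Matrix.trace_mul_cycle η A η]
    have u2 : (A*η).trace = (η*A).trace := Matrix.trace_mul_comm A η
    have p1 : ((η*η*A)*(η*A)).trace = ((η*η)*A*η*A).trace := by
      congr 1; simp only [Matrix.mul_assoc]
    have q1 : ((η*η*A)*(A*η)).trace = ((η*η*η)*A*(1:Mat n)*A).trace := by
      have h : (η*η*A)*(A*η) = (η*η*A*A)*η := by simp only [Matrix.mul_assoc]
      rw [h, Matrix.trace_mul_comm]
      try (congr 1; simp only [Matrix.mul_one, Matrix.mul_assoc])
    have p2 : ((η*A*η)*(η*A)).trace = ((η*η)*A*η*A).trace := by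
      have h : (η*A*η)*(η*A) = (η*A)*(η*η*A) := by simp only [Matrix.mul_assoc]
      rw [h, Matrix.trace_mul_comm]
      exact p1
    have p3 : ((η*A*η)*(A*η)).trace = ((η*η)*A*η*A).trace := by
      have h : (η*A*η)*(A*η) = (η*A*η*A)*η := by simp only [Matrix.mul_assoc]
      rw [h, Matrix.trace_mul_comm]
      try (congr 1; simp only [Matrix.mul_assoc])
    have q2 : ((A*η*η)*(η*A)).trace = ((η*η*η)*A*(1:Mat n)*A).trace := by
      have h : (A*η*η)*(η*A) = (A*(η*η*η))*A := by simp only [Matrix.mul_assoc]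
      rw [h, Matrix.trace_mul_comm, ← Matrix.mul_assoc, Matrix.trace_mul_comm]
      try (congr 1; simp only [Matrix.mul_one, Matrix.mul_assoc])
    have p4 : ((A*η*η)*(A*η)).trace = ((η*η)*A*η*A).trace := by
      have h : (A*η*η)*(A*η) = A*(η*η*A*η) := by simp only [Matrix.mul_assoc]
      rw [h, Matrix.trace_mul_comm]
      try (congr 1; simp only [Matrix.mul_assoc])
    rw [s2, s3, u2, p1, q1, p2, p3, q2, p4]
    ring
  rw [Finset.sum_congr rfl (fun i _ => hshape (bmat n i))]
  rw [← Finset.mul_sum]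
  rw [Finset.sum_sub_distrib, Finset.sum_sub_distrib, Finset.sum_add_distrib]
  rw [K1 n (η*η) η, K1 n (η*η*η) (1:Mat n)]
  rw [hη, eta_trace n hn, Matrix.mul_one, Matrix.trace_one]
  simp only [Fintype.card_fin]
  field_simp
  ring

set_option maxHeartbeats 1000000 in
/-- `(1/4)·Σ_{E₁,E₂,E₃,E₄ ∈ B} σ([E₁,[E₂,η]],E₃,E₄)·H(E₁,E₂)·H(E₃,E₄)
  = (n−2)²(n−1)n(n+2)`. -/
theorem sigma_H_H_contraction_first (n : ℕ) (hn : 3 ≤ n) :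
    (1 / 4 : ℂ) * ∑ i₁ : BIdx n, ∑ i₂ : BIdx n, ∑ i₃ : BIdx n, ∑ i₄ : BIdx n,
      sigmaC n (brkt (bmat n i₁) (brkt (bmat n i₂) (eta n))) (bmat n i₃) (bmat n i₄) *
        Hform n (bmat n i₁) (bmat n i₂) * Hform n (bmat n i₃) (bmat n i₄) =
      ((n : ℂ) - 2) ^ 2 * ((n : ℂ) - 1) * (n : ℂ) * ((n : ℂ) + 2) := by
  have hn1 : 1 ≤ n := by omega
  have hnz : (n:ℂ) ≠ 0 := Nat.cast_ne_zero.mpr (by omega)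
  have hI : Complex.I * Complex.I = -1 := Complex.I_mul_I
  have h1 : ∀ i₁ i₂ : BIdx n,
      ∑ i₃ : BIdx n, ∑ i₄ : BIdx n,
        sigmaC n (brkt (bmat n i₁) (brkt (bmat n i₂) (eta n))) (bmat n i₃) (bmat n i₄) *
          Hform n (bmat n i₁) (bmat n i₂) * Hform n (bmat n i₃) (bmat n i₄)
      = (8/(n:ℂ) - 2*(n:ℂ))
          * (((brkt (bmat n i₁) (brkt (bmat n i₂) (eta n))) * eta n).trace
              * Hform n (bmat n i₁) (bmat n i₂)) := by
    intro i₁ i₂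
    have hc : ∀ i₃ i₄ : BIdx n,
        sigmaC n (brkt (bmat n i₁) (brkt (bmat n i₂) (eta n))) (bmat n i₃) (bmat n i₄) *
          Hform n (bmat n i₁) (bmat n i₂) * Hform n (bmat n i₃) (bmat n i₄)
        = sigmaC n (brkt (bmat n i₁) (brkt (bmat n i₂) (eta n))) (bmat n i₃) (bmat n i₄) *
            Hform n (bmat n i₃) (bmat n i₄) * Hform n (bmat n i₁) (bmat n i₂) := by
      intro i₃ i₄; ring
    rw [Finset.sum_congr rfl (fun i₃ _ => Finset.sum_congr rfl (fun i₄ _ => hc i₃ i₄))]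
    have hp : ∀ i₃ : BIdx n,
        ∑ i₄ : BIdx n,
          sigmaC n (brkt (bmat n i₁) (brkt (bmat n i₂) (eta n))) (bmat n i₃) (bmat n i₄) *
            Hform n (bmat n i₃) (bmat n i₄) * Hform n (bmat n i₁) (bmat n i₂)
        = (∑ i₄ : BIdx n,
            sigmaC n (brkt (bmat n i₁) (brkt (bmat n i₂) (eta n))) (bmat n i₃) (bmat n i₄) *
              Hform n (bmat n i₃) (bmat n i₄)) * Hform n (bmat n i₁) (bmat n i₂) := by
      intro i₃; rw [Finset.sum_mul]
    rw [Finset.sum_congr rfl (fun i₃ _ => hp i₃), ← Finset.sum_mul]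
    rw [step34 n hn1 (brkt (bmat n i₁) (brkt (bmat n i₂) (eta n)))]
    ring
  rw [Finset.sum_congr rfl (fun i₁ _ => Finset.sum_congr rfl (fun i₂ _ => h1 i₁ i₂))]
  have h2 : ∀ i₁ : BIdx n,
      ∑ i₂ : BIdx n, (8/(n:ℂ) - 2*(n:ℂ))
          * (((brkt (bmat n i₁) (brkt (bmat n i₂) (eta n))) * eta n).trace
              * Hform n (bmat n i₁) (bmat n i₂))
      = (8/(n:ℂ) - 2*(n:ℂ)) * ∑ i₂ : BIdx n,
          (((brkt (bmat n i₁) (brkt (bmat n i₂) (eta n))) * eta n).trace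
              * Hform n (bmat n i₁) (bmat n i₂)) := by
    intro i₁; rw [Finset.mul_sum]
  rw [Finset.sum_congr rfl (fun i₁ _ => h2 i₁), ← Finset.mul_sum]
  rw [step12 n hn1, eta_cube_trace n hn1]
  field_simp
  linear_combination (-4*((n:ℂ)-2)^2*((n:ℂ)-1)*((n:ℂ)+2)) * hI
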